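/- arXiv:2502.14621 — 2 statements merged into one kernel-verified Lean document; each statement's English description precedes it below -/
import Mathlib

section
/- Let K be a bounded density on ℝ with compact support and τ² = ∫ K², let P(·|·) be a conditional density on ℝ₊ that is bounded and uniformly Lipschitz in its first variable, and let (z_k) be a sequence in ℝ₊ such that (1/n) Σ_{k=1}^n P(y₀|z_{k-1}) → μ(y₀) for a fixed y₀. With hₙ = n^{-γ}, 0 < γ < 1, define T_n = (1/(n hₙ)) Σ_{k=1}^n ∫ K²(u) P(hₙu + y₀ | z_{k-1}) du. Then n T_n ~ n^{1+γ} τ² μ(y₀) as n → ∞ (provided μ(y₀) > 0). -/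
/-!
Since `P` is `L`-Lipschitz in its first variable, smoothing `P (·) x` with the weight `K²`
at bandwidth `hₙ` moves it by at most `L hₙ ∫ |u| K²(u) du` uniformly in `x`, and this first
moment is finite because `K` has compact support. Hence the average
`(1/n) Σₖ ∫ K²(u) P(hₙu + y₀ | z_{k-1}) du = hₙ Tₙ` differs from
`τ² (1/n) Σₖ P(y₀ | z_{k-1})` by `O(hₙ) = o(1)`, so it tends to `τ² μ(y₀)`; finally
`n Tₙ = n^{1+γ} · hₙ Tₙ`, and `τ² > 0` because `K² = 0` a.e. would force `∫ K = 0`.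
-/

open MeasureTheory Filter Topology
open scoped NNReal

section Kernel

variable {α : Type*} [MeasurableSpace α] {μ : Measure α} {K : α → ℝ}

lemma MeasureTheory.Integrable.sq_of_abs_le {C : ℝ} (hK : Integrable K μ)
    (hC : ∀ u, |K u| ≤ C) : Integrable (fun u => K u ^ 2) μ := by
  simpa only [sq] using hK.bdd_mul hK.aestronglyMeasurable (.of_forall hC)

lemma integral_sq_ne_zero_of_integral_ne_zero (hK2 : Integrable (fun u => K u ^ 2) μ)
    (hK : ∫ u, K u ∂μ ≠ 0) : ∫ u, K u ^ 2 ∂μ ≠ 0 := by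
  intro hzero
  have hK2_ae : (fun u => K u ^ 2) =ᵐ[μ] 0 :=
    (integral_eq_zero_iff_of_nonneg (fun u => sq_nonneg (K u)) hK2).mp hzero
  have hK_ae : K =ᵐ[μ] 0 := by
    filter_upwards [hK2_ae] with u hu
    simpa using hu
  exact hK (by simp [integral_congr_ae hK_ae])

end Kernel

lemma MeasureTheory.Integrable.continuous_mul_of_hasCompactSupport {X : Type*} [TopologicalSpace X]
    [T2Space X] [MeasurableSpace X] [OpensMeasurableSpace X] {μ : Measure X} {f g : X → ℝ}
    (hf : Integrable f μ) (hf_supp : HasCompactSupport f) (hg : Continuous g) :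
    Integrable (fun x => g x * f x) μ := by
  have hsupp : Function.support (fun x => g x * f x) ⊆ tsupport f :=
    (Function.support_mul_subset_right _ _).trans (subset_tsupport f)
  rw [← integrableOn_iff_integrable_of_support_subset hsupp]
  exact hf.integrableOn.continuousOn_mul hg.continuousOn hf_supp

section LipschitzSmoothing

variable {w g : ℝ → ℝ} {C : ℝ≥0}

lemma abs_mul_comp_affine_sub_le (hg : LipschitzWith C g) (h y₀ u : ℝ) :
    |w u * g (h * u + y₀) - w u * g y₀| ≤ C * |h| * |u * w u| := by
  have hlip : |g (h * u + y₀) - g y₀| ≤ C * (|h| * |u|) := by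
    simpa [Real.dist_eq, abs_mul] using hg.dist_le_mul (h * u + y₀) y₀
  calc |w u * g (h * u + y₀) - w u * g y₀| = |w u| * |g (h * u + y₀) - g y₀| := by
        rw [← mul_sub, abs_mul]
    _ ≤ |w u| * (C * (|h| * |u|)) := by gcongr
    _ = C * |h| * |u * w u| := by rw [abs_mul]; ring

variable (hw : Integrable w) (hw₁ : Integrable fun u => u * w u) (hg : LipschitzWith C g)
include hw hw₁ hg

lemma integrable_mul_comp_affine (h y₀ : ℝ) : Integrable fun u => w u * g (h * u + y₀) := by
  have hdiff : Integrable fun u => w u * g (h * u + y₀) - w u * g y₀ :=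
    (hw₁.abs.const_mul (C * |h|)).mono'
      (hw.aestronglyMeasurable.mul (hg.continuous.comp (by fun_prop)).aestronglyMeasurable
        |>.sub (hw.mul_const _).aestronglyMeasurable)
      (.of_forall fun u => abs_mul_comp_affine_sub_le hg h y₀ u)
  exact (hdiff.add (hw.mul_const (g y₀))).congr (.of_forall fun u => by simp)

lemma abs_integral_mul_comp_affine_sub_le (h y₀ : ℝ) :
    |(∫ u, w u * g (h * u + y₀)) - (∫ u, w u) * g y₀| ≤ C * |h| * ∫ u, |u * w u| := by
  rw [← integral_mul_const, ← integral_sub (integrable_mul_comp_affine hw hw₁ hg h y₀)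
    (hw.mul_const _), ← integral_const_mul]
  exact norm_integral_le_of_norm_le (hw₁.abs.const_mul _)
    (.of_forall fun u =>
      (Real.norm_eq_abs _).trans_le (abs_mul_comp_affine_sub_le hg h y₀ u))

end LipschitzSmoothing

section Cesaro

noncomputable def cesaroMean (a : ℕ → ℝ) (n : ℕ) : ℝ :=
  (1 / (n : ℝ)) * ∑ k ∈ Finset.Icc 1 n, a k

lemma abs_cesaroMean_sub_le {a b : ℕ → ℝ} {ε : ℝ} {n : ℕ} (hε : 0 ≤ ε)
    (hab : ∀ k ∈ Finset.Icc 1 n, |a k - b k| ≤ ε) :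
    |cesaroMean a n - cesaroMean b n| ≤ ε := by
  rcases Nat.eq_zero_or_pos n with rfl | hn
  · simpa [cesaroMean] using hε
  have hn' : (0 : ℝ) < n := by exact_mod_cast hn
  calc |cesaroMean a n - cesaroMean b n|
      = (1 / (n : ℝ)) * |∑ k ∈ Finset.Icc 1 n, (a k - b k)| := by
        rw [cesaroMean, cesaroMean, ← mul_sub, ← Finset.sum_sub_distrib, abs_mul,
          abs_of_pos (by positivity)]
    _ ≤ (1 / (n : ℝ)) * ∑ _k ∈ Finset.Icc 1 n, ε := by
        gcongr
        exact (Finset.abs_sum_le_sum_abs _ _).trans (Finset.sum_le_sum hab)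
    _ = ε := by simp [field]

lemma tendsto_cesaroMean_of_abs_sub_le {a : ℕ → ℕ → ℝ} {b δ : ℕ → ℝ} {l : ℝ}
    (hb : Tendsto (cesaroMean b) atTop (𝓝 l)) (hδ : Tendsto δ atTop (𝓝 0))
    (hab : ∀ n k, |a n k - b k| ≤ δ n) :
    Tendsto (fun n => cesaroMean (a n) n) atTop (𝓝 l) := by
  have hclose : Tendsto (fun n => cesaroMean (a n) n - cesaroMean b n) atTop (𝓝 0) :=
    squeeze_zero_norm (fun n => abs_cesaroMean_sub_le ((abs_nonneg _).trans (hab n 0))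
      fun k _ => hab n k) hδ
  simpa using hclose.add hb

end Cesaro

theorem quadratic_variation_leading_term_equiv_general
    (K : ℝ → ℝ) (hK_nn : ∀ u, 0 ≤ K u) (hK_int : (∫ u, K u) = 1)
    (CK : ℝ) (hK_bdd : ∀ u, K u ≤ CK) (hK_supp : HasCompactSupport K)
    (τsq : ℝ) (hτ : τsq = ∫ u, (K u) ^ 2)
    (P : ℝ → ℝ → ℝ)
    (L : ℝ) (hLip : ∀ x y z : ℝ, |P y x - P z x| ≤ L * |y - z|)
    (z : ℕ → ℝ) (y₀ : ℝ) (μy : ℝ) (hμpos : 0 < μy)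
    (hCesaro : Tendsto (fun n : ℕ =>
        (1 / (n : ℝ)) * ∑ k ∈ Finset.Icc 1 n, P y₀ (z (k - 1)))
      atTop (nhds μy))
    (γ : ℝ) (hγ0 : 0 < γ)
    (h : ℕ → ℝ) (hh : ∀ n : ℕ, h n = (n : ℝ) ^ (-γ))
    (T : ℕ → ℝ)
    (hT : ∀ n : ℕ, T n = (1 / ((n : ℝ) * h n)) * ∑ k ∈ Finset.Icc 1 n,
        ∫ u, (K u) ^ 2 * P (h n * u + y₀) (z (k - 1))) :
    Tendsto (fun n : ℕ => ((n : ℝ) * T n) / ((n : ℝ) ^ (1 + γ) * τsq * μy))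
      atTop (nhds 1) := by
  have hKi : Integrable K := .of_integral_ne_zero (by simp [hK_int])
  have hK2 : Integrable fun u => K u ^ 2 :=
    hKi.sq_of_abs_le fun u => (abs_of_nonneg (hK_nn u)).trans_le (hK_bdd u)
  have hK2₁ : Integrable fun u => u * K u ^ 2 :=
    hK2.continuous_mul_of_hasCompactSupport (hK_supp.comp_left (g := (· ^ 2)) (by simp))
      continuous_id
  have hP_lip : ∀ x, LipschitzWith L.toNNReal fun y => P y x := fun x =>
    .of_dist_le_mul fun y y' => by
      simpa only [Real.dist_eq] using
        (hLip x y y').trans (by gcongr; exact Real.le_coe_toNNReal L)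
  have hh0 : Tendsto h atTop (𝓝 0) :=
    funext hh ▸ (tendsto_rpow_neg_atTop hγ0).comp tendsto_natCast_atTop_atTop
  have hA : Tendsto (fun n => cesaroMean (fun k => τsq * P y₀ (z (k - 1))) n) atTop
      (𝓝 (τsq * μy)) := by
    simpa only [cesaroMean, ← Finset.mul_sum, mul_left_comm] using hCesaro.const_mul τsq
  have hδ : Tendsto (fun n => L.toNNReal * |h n| * ∫ u, |u * K u ^ 2|) atTop (𝓝 0) := by
    simpa only [abs_zero, mul_zero, zero_mul] using
      (hh0.abs.const_mul (L.toNNReal : ℝ)).mul_const (∫ u, |u * K u ^ 2|)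
  have hS : Tendsto
      (fun n => cesaroMean (fun k => ∫ u, K u ^ 2 * P (h n * u + y₀) (z (k - 1))) n)
      atTop (𝓝 (τsq * μy)) :=
    tendsto_cesaroMean_of_abs_sub_le hA hδ fun n k =>
      hτ ▸ abs_integral_mul_comp_affine_sub_le hK2 hK2₁ (hP_lip _) (h n) y₀
  have hτ0 : τsq ≠ 0 := hτ ▸ integral_sq_ne_zero_of_integral_ne_zero hK2 (by simp [hK_int])
  have hrescale : ∀ᶠ n : ℕ in atTop,
      cesaroMean (fun k => ∫ u, K u ^ 2 * P (h n * u + y₀) (z (k - 1))) n / (τsq * μy)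
        = ((n : ℝ) * T n) / ((n : ℝ) ^ (1 + γ) * τsq * μy) := by
    filter_upwards [eventually_gt_atTop 0] with n hn
    have hn' : (0 : ℝ) < n := by exact_mod_cast hn
    have hpow : (n : ℝ) ^ (1 + γ) = n / h n := by
      rw [hh, Real.rpow_add hn', Real.rpow_one, Real.rpow_neg hn'.le, div_inv_eq_mul]
    have hhn : h n ≠ 0 := by rw [hh]; positivity
    rw [hT n, hpow, cesaroMean]
    field_simp
  simpa [div_self (mul_ne_zero hτ0 hμpos.ne')] using (hS.div_const (τsq * μy)).congr' hrescale

/-- n·Tₙ ~ n^{1+γ} τ² μ(y₀) for the leading term of the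
predictable quadratic variation of the kernel-estimation martingale. -/
theorem quadratic_variation_leading_term_equiv
    (K : ℝ → ℝ) (hK_nn : ∀ u, 0 ≤ K u) (hK_int : (∫ u, K u) = 1)
    (CK : ℝ) (hK_bdd : ∀ u, K u ≤ CK) (hK_supp : HasCompactSupport K)
    (τsq : ℝ) (hτ : τsq = ∫ u, (K u) ^ 2)
    (P : ℝ → ℝ → ℝ) (hP_nn : ∀ y x, 0 ≤ P y x)
    (CP : ℝ) (hP_bdd : ∀ y x, P y x ≤ CP)
    (L : ℝ) (hLip : ∀ x y z : ℝ, |P y x - P z x| ≤ L * |y - z|)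
    (z : ℕ → ℝ) (y₀ : ℝ) (μy : ℝ) (hμpos : 0 < μy)
    (hCesaro : Tendsto (fun n : ℕ =>
        (1 / (n : ℝ)) * ∑ k ∈ Finset.Icc 1 n, P y₀ (z (k - 1)))
      atTop (nhds μy))
    (γ : ℝ) (hγ0 : 0 < γ) (hγ1 : γ < 1)
    (h : ℕ → ℝ) (hh : ∀ n : ℕ, h n = (n : ℝ) ^ (-γ))
    (T : ℕ → ℝ)
    (hT : ∀ n : ℕ, T n = (1 / ((n : ℝ) * h n)) * ∑ k ∈ Finset.Icc 1 n,
        ∫ u, (K u) ^ 2 * P (h n * u + y₀) (z (k - 1))) :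
    Tendsto (fun n : ℕ => ((n : ℝ) * T n) / ((n : ℝ) ^ (1 + γ) * τsq * μy))
      atTop (nhds 1) :=
  quadratic_variation_leading_term_equiv_general K hK_nn hK_int CK hK_bdd hK_supp τsq hτ P L hLip z
    y₀ μy hμpos hCesaro γ hγ0 h hh T hT
end

section
/- Let M_n be an ℝ²-valued martingale whose predictable square variation matrix satisfies ⟨M⟩_n^{(1,1)} = n^{1+γ} ω₁ (1 + o(1)) a.s., ⟨M⟩_n^{(2,2)} = n ω₂ (1 + o(1)) a.s. with ω₁ > 0, ω₂ > 0, and off-diagonal entries O(n), for some 0 < γ < 1. Then ‖M_n‖/n → 0 almost surely. -/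
/-!
Each coordinate `N` of `M` is a real martingale whose predictable quadratic variation `⟨N⟩_n` is
asymptotic to a multiple of `n ^ c` with `c = 1 + γ` or `c = 1`, so `c < 2`.

Since `⟨N⟩_n → ∞`, every `N_k` is square integrable. Summation by parts turns `⟨N⟩_n = O(n ^ c)`
into `∑ E[(N_{k+1} - N_k)² | ℱ_k] / (k + 1)² < ∞`, the predictable quadratic variation of the
martingale `∑ (N_{k+1} - N_k) / (k + 1)`. A square integrable martingale converges wherever its
predictable quadratic variation stays bounded: stopped before that variation exceeds `K`, it is
bounded in `L²`. Kronecker's lemma then gives `N_n / n → 0`.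
-/

open MeasureTheory Filter Topology Finset ProbabilityTheory Asymptotics

theorem sum_range_eq_mul_sub_sum_partialSums (x : ℕ → ℝ) (n : ℕ) :
    ∑ k ∈ range n, x k = n * ∑ k ∈ range n, x k / (k + 1)
      - ∑ j ∈ range n, ∑ k ∈ range j, x k / (k + 1) := by
  induction n with
  | zero => simp
  | succ n ih =>
    simp only [sum_range_succ, ih]
    push_cast
    field_simp
    ring

/-- Kronecker's lemma with weights `k + 1`. -/
theorem tendsto_sum_range_div_of_tendsto_sum_range_div {x : ℕ → ℝ} {L : ℝ}
    (hx : Tendsto (fun n => ∑ k ∈ range n, x k / (k + 1)) atTop (𝓝 L)) :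
    Tendsto (fun n => (∑ k ∈ range n, x k) / n) atTop (𝓝 0) := by
  have hlim := hx.sub hx.cesaro
  rw [sub_self] at hlim
  refine hlim.congr' ?_
  filter_upwards [eventually_ne_atTop 0] with n hn
  have hn' : (n : ℝ) ≠ 0 := Nat.cast_ne_zero.mpr hn
  rw [sum_range_eq_mul_sub_sum_partialSums x n, sub_div, mul_div_cancel_left₀ _ hn', inv_mul_eq_div]

theorem inv_sq_sub_inv_succ_sq_mul_le {x q C c : ℝ} (hx : 1 ≤ x) (hC : 0 ≤ C)
    (hq : q ≤ C * x ^ c) : ((x ^ 2)⁻¹ - ((x + 1) ^ 2)⁻¹) * q ≤ 2 * C * x ^ (c - 3) := by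
  have hw : (x ^ 2)⁻¹ - ((x + 1) ^ 2)⁻¹ ≤ 2 / x ^ 3 := by
    rw [inv_sub_inv (by positivity) (by positivity),
      div_le_div_iff₀ (by positivity) (by positivity)]
    nlinarith [pow_pos (by linarith : (0 : ℝ) < x) 3]
  have hw0 : 0 ≤ (x ^ 2)⁻¹ - ((x + 1) ^ 2)⁻¹ := by
    rw [sub_nonneg]; gcongr; linarith
  calc _ ≤ (2 / x ^ 3) * (C * x ^ c) := mul_le_mul_of_nonneg hw hq hw0 (by positivity)
    _ = 2 * C * x ^ (c - 3) := by rw [Real.rpow_sub (by positivity), Real.rpow_ofNat]; ring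

theorem bddAbove_sum_range_div_sq_of_le_rpow {d : ℕ → ℝ} {C c : ℝ} (hc : c < 2)
    (hC : 0 ≤ C) (hq : ∀ n, ∑ k ∈ range n, d k ≤ C * (n : ℝ) ^ c) :
    BddAbove (Set.range fun n => ∑ k ∈ range n, d k / (k + 1) ^ 2) := by
  set f : ℕ → ℝ := fun k => (((k : ℝ) + 1) ^ 2)⁻¹
  set B : ℕ → ℝ := fun k => 2 * C * ((k : ℝ) + 1) ^ (c - 3)
  have hB : Summable B := by
    simpa [B] using ((summable_nat_add_iff 1).mpr
      (Real.summable_nat_rpow.mpr (by linarith : c - 3 < -1))).mul_left (2 * C)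
  have hterm (k : ℕ) : -((f (k + 1) - f k) * ∑ j ∈ range (k + 1), d j) ≤ B k := by
    have := inv_sq_sub_inv_succ_sq_mul_le (x := (k : ℝ) + 1) (by simp) hC
      (by simpa using hq (k + 1))
    simp only [f, B, neg_mul_eq_neg_mul, neg_sub, Nat.cast_succ]
    exact this
  refine ⟨C + ∑' k, B k, ?_⟩
  have hB0 (k : ℕ) : 0 ≤ B k := by positivity
  rintro _ ⟨_ | n, rfl⟩
  · simpa using add_nonneg hC (tsum_nonneg hB0)
  have hlast : f n * ∑ j ∈ range (n + 1), d j ≤ C := by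
    have hx : (1 : ℝ) ≤ (n : ℝ) + 1 := by simp
    calc f n * ∑ j ∈ range (n + 1), d j
        ≤ (((n : ℝ) + 1) ^ 2)⁻¹ * (C * ((n : ℝ) + 1) ^ (2 : ℝ)) := by
          refine mul_le_mul_of_nonneg_left ((hq _).trans ?_) (by positivity)
          push_cast
          gcongr
      _ = C := by
          rw [Real.rpow_two]; field_simp
  have hrest : -∑ k ∈ range n, (f (k + 1) - f k) * ∑ j ∈ range (k + 1), d j ≤ ∑' k, B k := by
    rw [← sum_neg_distrib]
    exact (sum_le_sum fun k _ => hterm k).trans (hB.sum_le_tsum _ fun k _ => hB0 k)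
  have hparts := sum_range_by_parts (n := n + 1) f d
  simp only [smul_eq_mul, Nat.add_sub_cancel] at hparts
  simp only [div_eq_inv_mul]
  change ∑ k ∈ range (n + 1), f k * d k ≤ _
  linarith

theorem bddAbove_sum_range_div_sq_of_isBigO {d : ℕ → ℝ} {c : ℝ} (hc : c < 2)
    (hq : (fun n => ∑ k ∈ range n, d k) =O[atTop] fun n => (n : ℝ) ^ c) :
    BddAbove (Set.range fun n => ∑ k ∈ range n, d k / (k + 1) ^ 2) := by
  rw [← Nat.cofinite_eq_atTop, isBigO_cofinite_iff fun n hn => ?_] at hq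
  · obtain ⟨C, hC⟩ := hq
    have hC0 : 0 ≤ C := by simpa using (norm_nonneg _).trans (hC 1)
    refine bddAbove_sum_range_div_sq_of_le_rpow hc hC0 fun n => ?_
    calc ∑ k ∈ range n, d k ≤ ‖∑ k ∈ range n, d k‖ := Real.le_norm_self _
      _ ≤ C * ‖(n : ℝ) ^ c‖ := hC n
      _ = C * (n : ℝ) ^ c := by rw [Real.norm_of_nonneg (by positivity)]
  · rw [Real.rpow_eq_zero_iff_of_nonneg (by positivity), Nat.cast_eq_zero] at hn
    simp [hn.1]

theorem sum_range_ite_le_of_forall_sum_le {v : ℕ → ℝ} {K : ℝ} (hK : 0 ≤ K) (n : ℕ) :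
    ∑ k ∈ range n, (if ∀ j ≤ k + 1, ∑ i ∈ range j, v i ≤ K then v k else 0) ≤ K := by
  induction n with
  | zero => simpa using hK
  | succ n ih =>
    by_cases h : ∀ j ≤ n + 1, ∑ i ∈ range j, v i ≤ K
    · calc _ = ∑ k ∈ range (n + 1), v k :=
            sum_congr rfl fun k hk => if_pos fun j hj => h j (by simp at hk; omega)
        _ ≤ K := h (n + 1) le_rfl
    · rwa [sum_range_succ, if_neg h, add_zero]

namespace MeasureTheory

variable {Ω : Type*} {m0 : MeasurableSpace Ω}

noncomputable def predictableQuadVar (P : Measure Ω) (ℱ : Filtration ℕ m0) (N : ℕ → Ω → ℝ)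
    (n : ℕ) (ω : Ω) : ℝ :=
  ∑ k ∈ Icc 1 n, ((P[fun ω' => N k ω' * N k ω' | ℱ (k - 1)]) ω - N (k - 1) ω * N (k - 1) ω)

variable {E F : Type*} {ℱ : Filtration ℕ m0} {P : Measure Ω}

theorem Martingale.comp_continuousLinearMap [NormedAddCommGroup E] [NormedSpace ℝ E]
    [CompleteSpace E] [NormedAddCommGroup F] [NormedSpace ℝ F] [CompleteSpace F]
    {M : ℕ → Ω → E} (hM : Martingale M ℱ P) (T : E →L[ℝ] F) :
    Martingale (fun n => T ∘ M n) ℱ P := by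
  refine ⟨fun n => T.continuous.comp_stronglyMeasurable (hM.stronglyAdapted n), fun i j hij => ?_⟩
  filter_upwards [T.comp_condExp_comm (m := ℱ i) (hM.integrable j), hM.condExp_ae_eq hij]
    with ω hT hMij
  rw [← hT, Function.comp_apply, hMij]
  rfl

theorem Martingale.memLp_of_le [NormedAddCommGroup E] [NormedSpace ℝ E] [CompleteSpace E]
    {N : ℕ → Ω → E} {p : ENNReal} (hp : 1 ≤ p) (hN : Martingale N ℱ P) {i j : ℕ} (hij : i ≤ j)
    (hj : MemLp (N j) p P) : MemLp (N i) p P :=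
  (hj.condExp hp).ae_eq (hN.condExp_ae_eq hij)

theorem predictableQuadVar_succ (N : ℕ → Ω → ℝ) (n : ℕ) (ω : Ω) :
    predictableQuadVar P ℱ N (n + 1) ω = predictableQuadVar P ℱ N n ω
      + ((P[fun ω' => N (n + 1) ω' * N (n + 1) ω' | ℱ n]) ω - N n ω * N n ω) := by
  rw [predictableQuadVar, sum_Icc_succ_top (by omega), Nat.add_sub_cancel]
  rfl

theorem Martingale.memLp_two_of_tendsto_predictableQuadVar {N : ℕ → Ω → ℝ}
    (hN : Martingale N ℱ P)
    (h : ∃ ω, Tendsto (fun n => predictableQuadVar P ℱ N n ω) atTop atTop) (k : ℕ) :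
    MemLp (N k) 2 P := by
  by_contra hk
  obtain ⟨ω, hω⟩ := h
  -- past `k` the conditional expectations are the junk value `0`, so `⟨N⟩` can only decrease
  have hzero (n : ℕ) (hn : k ≤ n) : P[fun ω' => N (n + 1) ω' * N (n + 1) ω' | ℱ n] = 0 := by
    refine condExp_of_not_integrable fun hint =>
      hk (hN.memLp_of_le one_le_two (j := n + 1) (by omega) ?_)
    exact (memLp_two_iff_integrable_sq (hN.integrable _).1).2 (by simpa only [sq] using hint)
  have hanti (n : ℕ) (hn : k ≤ n) :
      predictableQuadVar P ℱ N n ω ≤ predictableQuadVar P ℱ N k ω := by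
    induction n, hn using Nat.le_induction with
    | base => exact le_rfl
    | succ n hn ih =>
      rw [predictableQuadVar_succ, hzero n hn, Pi.zero_apply]
      nlinarith [mul_self_nonneg (N n ω)]
  obtain ⟨n, hgt, hge⟩ :=
    ((hω.eventually_gt_atTop (predictableQuadVar P ℱ N k ω)).and (eventually_ge_atTop k)).exists
  exact (hanti n hge).not_gt hgt

theorem memLp_sum_indicator_sub [NormedAddCommGroup E] {U : ℕ → Ω → E} {p : ENNReal}
    (hU : ∀ n, MemLp (U n) p P) {A : ℕ → Set Ω} (hA : ∀ k, MeasurableSet[ℱ k] (A k)) (n : ℕ) :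
    MemLp (∑ k ∈ range n, (A k).indicator (U (k + 1) - U k)) p P :=
  memLp_finsetSum' _ fun k _ => ((hU (k + 1)).sub (hU k)).indicator (ℱ.le k _ (hA k))

variable [IsFiniteMeasure P]

theorem Martingale.condExp_mul_self_sub_mul_self_ae_eq {N : ℕ → Ω → ℝ} (hN : Martingale N ℱ P)
    {k : ℕ} (hk : MemLp (N (k + 1)) 2 P) :
    P[fun ω => N (k + 1) ω * N (k + 1) ω | ℱ k] - (fun ω => N k ω * N k ω)
      =ᵐ[P] P[fun ω => (N (k + 1) ω - N k ω) ^ 2 | ℱ k] := by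
  have hvar := condVar_ae_eq_condExp_sq_sub_sq_condExp (ℱ.le k) hk
  have hcond := hN.condExp_ae_eq k.le_succ
  have hsq : P[(N (k + 1) - P[N (k + 1) | ℱ k]) ^ 2 | ℱ k]
      =ᵐ[P] P[fun ω => (N (k + 1) ω - N k ω) ^ 2 | ℱ k] :=
    condExp_congr_ae (by filter_upwards [hcond] with ω hω; simp [hω])
  filter_upwards [hvar, hcond, hsq] with ω h1 h2 h3
  rw [condVar] at h1
  simp only [Pi.sub_apply, Pi.pow_apply, h2] at h1 ⊢
  rw [← h3, h1, sq, sq]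
  rfl

theorem Martingale.predictableQuadVar_ae_eq {N : ℕ → Ω → ℝ} (hN : Martingale N ℱ P)
    (hN2 : ∀ k, MemLp (N k) 2 P) :
    ∀ᵐ ω ∂P, ∀ n, predictableQuadVar P ℱ N n ω
      = ∑ k ∈ range n, P[fun ω => (N (k + 1) ω - N k ω) ^ 2 | ℱ k] ω := by
  filter_upwards [ae_all_iff.2 fun k => hN.condExp_mul_self_sub_mul_self_ae_eq (hN2 (k + 1))]
    with ω hω n
  induction n with
  | zero => simp [predictableQuadVar]
  | succ n ih => rw [predictableQuadVar_succ, sum_range_succ, ih, ← hω n]; rfl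

theorem Martingale.sum_mul_sub {U ξ : ℕ → Ω → ℝ} {R : ℝ} (hU : Martingale U ℱ P)
    (hξ : StronglyAdapted ℱ ξ) (hbdd : ∀ n ω, ξ n ω ≤ R) (hnonneg : ∀ n ω, 0 ≤ ξ n ω) :
    Martingale (fun n => ∑ k ∈ range n, ξ k * (U (k + 1) - U k)) ℱ P := by
  refine martingale_iff.2 ⟨?_, hU.submartingale.sum_mul_sub hξ hbdd hnonneg⟩
  convert (hU.neg.submartingale.sum_mul_sub hξ hbdd hnonneg).neg using 1
  funext n
  simp only [Pi.neg_apply, ← sum_neg_distrib]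
  refine sum_congr rfl fun k _ => ?_
  ring

theorem Martingale.sum_indicator_sub {U : ℕ → Ω → ℝ} (hU : Martingale U ℱ P) {A : ℕ → Set Ω}
    (hA : ∀ k, MeasurableSet[ℱ k] (A k)) :
    Martingale (fun n => ∑ k ∈ range n, (A k).indicator (U (k + 1) - U k)) ℱ P := by
  convert hU.sum_mul_sub (fun k => stronglyMeasurable_one.indicator (hA k))
    (fun k => Set.indicator_le_self' fun _ _ => zero_le_one) (fun k => Set.indicator_nonneg
      fun _ _ => zero_le_one) using 3 with n k
  funext ω
  by_cases hω : ω ∈ A k <;> simp [hω]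

theorem Martingale.integral_sq_succ {W : ℕ → Ω → ℝ} (hW : Martingale W ℱ P) {k : ℕ}
    (hk : MemLp (W k) 2 P) (hk1 : MemLp (W (k + 1)) 2 P) :
    ∫ ω, W (k + 1) ω ^ 2 ∂P = ∫ ω, W k ω ^ 2 ∂P + ∫ ω, (W (k + 1) ω - W k ω) ^ 2 ∂P := by
  have hsq : Integrable (fun ω => W k ω * W k ω) P := by simpa only [sq] using hk.integrable_sq
  calc ∫ ω, W (k + 1) ω ^ 2 ∂P = ∫ ω, P[fun ω => W (k + 1) ω * W (k + 1) ω | ℱ k] ω ∂P := by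
        simp only [sq]; exact (integral_condExp (ℱ.le k)).symm
    _ = ∫ ω, (W k ω * W k ω + P[fun ω => (W (k + 1) ω - W k ω) ^ 2 | ℱ k] ω) ∂P := by
        refine integral_congr_ae ?_
        filter_upwards [hW.condExp_mul_self_sub_mul_self_ae_eq hk1] with ω hω
        rw [← hω, Pi.sub_apply, add_sub_cancel]
    _ = _ := by
        rw [integral_add hsq integrable_condExp, integral_condExp (ℱ.le k)]
        simp only [sq]

theorem Martingale.integral_sq_sum_indicator_sub {U : ℕ → Ω → ℝ} (hU : Martingale U ℱ P)
    (hU2 : ∀ n, MemLp (U n) 2 P) {A : ℕ → Set Ω} (hA : ∀ k, MeasurableSet[ℱ k] (A k)) (n : ℕ) :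
    ∫ ω, (∑ k ∈ range n, (A k).indicator (U (k + 1) - U k) ω) ^ 2 ∂P
      = ∑ k ∈ range n, ∫ ω in A k, P[fun ω => (U (k + 1) ω - U k ω) ^ 2 | ℱ k] ω ∂P := by
  induction n with
  | zero => simp
  | succ n ih =>
    have hstep := (hU.sum_indicator_sub hA).integral_sq_succ (memLp_sum_indicator_sub hU2 hA n)
      (memLp_sum_indicator_sub hU2 hA (n + 1))
    simp only [Finset.sum_apply, sum_range_succ_sub_sum] at hstep
    rw [hstep, ih, sum_range_succ]
    congr 1
    rw [setIntegral_condExp (f := fun ω => (U (n + 1) ω - U n ω) ^ 2) (ℱ.le n)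
        ((hU2 (n + 1)).sub (hU2 n)).integrable_sq (hA n),
      ← integral_indicator (ℱ.le n _ (hA n))]
    refine integral_congr_ae (Eventually.of_forall fun ω => ?_)
    by_cases hω : ω ∈ A n <;> simp [hω]

theorem Submartingale.ae_exists_tendsto_of_integral_sq_le {W : ℕ → Ω → ℝ}
    (hW : Submartingale W ℱ P) (hW2 : ∀ n, MemLp (W n) 2 P) {R : ℝ}
    (hR : ∀ n, ∫ ω, W n ω ^ 2 ∂P ≤ R) :
    ∀ᵐ ω ∂P, ∃ l, Tendsto (fun n => W n ω) atTop (𝓝 l) := by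
  have hL1 (n : ℕ) : eLpNorm (W n) 1 P ≤ ((R + P.real Set.univ) / 2).toNNReal := by
    rw [eLpNorm_one_eq_lintegral_enorm, ← ofReal_integral_norm_eq_lintegral_enorm (hW.integrable n)]
    refine ENNReal.ofReal_le_ofReal ?_
    calc ∫ ω, ‖W n ω‖ ∂P ≤ ∫ ω, (W n ω ^ 2 + 1) / 2 ∂P := by
          refine integral_mono (hW.integrable n).norm
            (((hW2 n).integrable_sq.add (integrable_const 1)).div_const 2) fun ω => ?_
          rw [Real.norm_eq_abs]
          nlinarith [sq_nonneg (|W n ω| - 1), sq_abs (W n ω)]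
      _ ≤ (R + P.real Set.univ) / 2 := by
          rw [integral_div, integral_add (hW2 n).integrable_sq (integrable_const 1)]
          simp only [integral_const, smul_eq_mul, mul_one]
          linarith [hR n]
  filter_upwards [hW.ae_tendsto_limitProcess hL1] with ω hω
  exact ⟨_, hω⟩

theorem Martingale.ae_exists_tendsto_of_bddAbove_sum_condExp_sq {U : ℕ → Ω → ℝ}
    (hU : Martingale U ℱ P) (hU2 : ∀ n, MemLp (U n) 2 P) :
    ∀ᵐ ω ∂P, BddAbove (Set.range fun n =>
        ∑ k ∈ range n, P[fun ω => (U (k + 1) ω - U k ω) ^ 2 | ℱ k] ω) →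
      ∃ l, Tendsto (fun n => U n ω) atTop (𝓝 l) := by
  set v : ℕ → Ω → ℝ := fun k => P[fun ω => (U (k + 1) ω - U k ω) ^ 2 | ℱ k]
  have hK (K : ℕ) : ∀ᵐ ω ∂P, (∀ n, ∑ k ∈ range n, v k ω ≤ K) →
      ∃ l, Tendsto (fun n => U n ω) atTop (𝓝 l) := by
    -- stop the increments of `U` before the sum of the conditional variances exceeds `K`
    set A : ℕ → Set Ω := fun k => {ω | ∀ j ≤ k + 1, ∑ i ∈ range j, v i ω ≤ K}
    have hA (k : ℕ) : MeasurableSet[ℱ k] (A k) := by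
      simp only [A, Set.ofPred_forall]
      refine .iInter fun j => .iInter fun hj => measurableSet_le ?_ measurable_const
      refine (Finset.stronglyMeasurable_fun_sum _ fun i hi => ?_).measurable
      exact stronglyMeasurable_condExp.mono (ℱ.mono (by simp at hi; omega))
    set W : ℕ → Ω → ℝ := fun n => ∑ k ∈ range n, (A k).indicator (U (k + 1) - U k)
    have hbound (n : ℕ) : ∫ ω, W n ω ^ 2 ∂P ≤ P.real Set.univ * K := by
      have hint (k : ℕ) : Integrable ((A k).indicator (v k)) P :=
        integrable_condExp.indicator (ℱ.le k _ (hA k))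
      simp only [W, Finset.sum_apply]
      rw [hU.integral_sq_sum_indicator_sub hU2 hA n]
      simp only [← integral_indicator (ℱ.le _ _ (hA _))]
      rw [← integral_finsetSum _ fun k _ => hint k]
      refine (integral_mono (integrable_finsetSum _ fun k _ => hint k) (integrable_const (K : ℝ))
        fun ω => ?_).trans (by simp)
      simpa only [Set.indicator_apply, A, Set.mem_ofPred_eq] using
        sum_range_ite_le_of_forall_sum_le (v := fun k => v k ω) K.cast_nonneg n
    filter_upwards [(hU.sum_indicator_sub hA).submartingale.ae_exists_tendsto_of_integral_sq_le
      (memLp_sum_indicator_sub hU2 hA) hbound] with ω ⟨l, hl⟩ hω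
    refine ⟨l + U 0 ω, (hl.add_const (U 0 ω)).congr fun n => ?_⟩
    have hmem (k : ℕ) : ω ∈ A k := fun j _ => hω j
    simp only [Finset.sum_apply, Set.indicator_of_mem (hmem _), Pi.sub_apply]
    rw [sum_range_sub (fun i => U i ω), sub_add_cancel]
  filter_upwards [ae_all_iff.2 hK] with ω hω ⟨B, hB⟩
  exact hω ⌈B⌉₊ fun n => (hB ⟨n, rfl⟩).trans (Nat.le_ceil B)

theorem Martingale.ae_tendsto_div_of_isBigO_predictableQuadVar {N : ℕ → Ω → ℝ}
    (hN : Martingale N ℱ P) (hN2 : ∀ k, MemLp (N k) 2 P) {c : ℝ} (hc : c < 2)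
    (hV : ∀ᵐ ω ∂P, (fun n => predictableQuadVar P ℱ N n ω) =O[atTop] fun n => (n : ℝ) ^ c) :
    ∀ᵐ ω ∂P, Tendsto (fun n => N n ω / n) atTop (𝓝 0) := by
  set ξ : ℕ → Ω → ℝ := fun k _ => ((k : ℝ) + 1)⁻¹
  set U : ℕ → Ω → ℝ := fun n => ∑ k ∈ range n, ξ k * (N (k + 1) - N k)
  have hU : Martingale U ℱ P := hN.sum_mul_sub (R := 1) (fun _ => stronglyMeasurable_const)
    (fun k _ => inv_le_one_of_one_le₀ (by simp)) fun _ _ => by positivity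
  have hU2 (n : ℕ) : MemLp (U n) 2 P :=
    memLp_finsetSum' _ fun k _ => ((hN2 (k + 1)).sub (hN2 k)).const_mul ((k : ℝ) + 1)⁻¹
  have hvar (k : ℕ) : P[fun ω => (U (k + 1) ω - U k ω) ^ 2 | ℱ k]
      =ᵐ[P] fun ω => P[fun ω => (N (k + 1) ω - N k ω) ^ 2 | ℱ k] ω / (k + 1) ^ 2 := by
    have hΔ : (fun ω => (U (k + 1) ω - U k ω) ^ 2)
        = (((k : ℝ) + 1) ^ 2)⁻¹ • fun ω => (N (k + 1) ω - N k ω) ^ 2 := by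
      have hinc : U (k + 1) - U k = ξ k * (N (k + 1) - N k) := sum_range_succ_sub_sum _
      funext ω
      rw [← Pi.sub_apply (U (k + 1)), hinc, Pi.smul_apply, smul_eq_mul]
      simp only [ξ, Pi.mul_apply, Pi.sub_apply, ← inv_pow]
      ring
    filter_upwards [condExp_smul (m := ℱ k) (μ := P) (((k : ℝ) + 1) ^ 2)⁻¹
      (fun ω => (N (k + 1) ω - N k ω) ^ 2)] with ω hω
    rw [hΔ, hω, Pi.smul_apply, smul_eq_mul, div_eq_inv_mul]
  filter_upwards [hU.ae_exists_tendsto_of_bddAbove_sum_condExp_sq hU2,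
    hN.predictableQuadVar_ae_eq hN2, hV, ae_all_iff.2 hvar] with ω hconv hpqv hO hvarω
  simp only [hpqv] at hO
  obtain ⟨l, hl⟩ := hconv (by simpa only [hvarω] using bddAbove_sum_range_div_sq_of_isBigO hc hO)
  have hkron := tendsto_sum_range_div_of_tendsto_sum_range_div (x := fun k => N (k + 1) ω - N k ω)
    (hl.congr fun n => by simp [U, ξ, div_eq_inv_mul])
  simp only [sum_range_sub (fun k => N k ω)] at hkron
  have hsum := hkron.add (tendsto_const_div_atTop_nhds_zero_nat (N 0 ω))
  rw [zero_add] at hsum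
  exact hsum.congr fun n => by rw [← add_div, sub_add_cancel]

theorem Martingale.ae_tendsto_div_of_tendsto_predictableQuadVar_div [NeZero P]
    {N : ℕ → Ω → ℝ} (hN : Martingale N ℱ P) {w : ℕ → ℝ} {c : ℝ} (hc : c < 2)
    (hw : Tendsto w atTop atTop) (hwc : w =O[atTop] fun n => (n : ℝ) ^ c)
    (hV : ∀ᵐ ω ∂P, Tendsto (fun n => predictableQuadVar P ℱ N n ω / w n) atTop (𝓝 1)) :
    ∀ᵐ ω ∂P, Tendsto (fun n => N n ω / n) atTop (𝓝 0) := by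
  have hequiv : ∀ᵐ ω ∂P, (fun n => predictableQuadVar P ℱ N n ω) ~[atTop] w :=
    hV.mono fun ω h => isEquivalent_of_tendsto_one h
  have hN2 := hN.memLp_two_of_tendsto_predictableQuadVar
    (hequiv.exists.imp fun ω h => h.symm.tendsto_atTop hw)
  exact hN.ae_tendsto_div_of_isBigO_predictableQuadVar hN2 hc
    (hequiv.mono fun ω h => h.isBigO.trans hwc)

end MeasureTheory

theorem vector_martingale_slln_general {Ω : Type*} {m0 : MeasurableSpace Ω}
    (P : Measure Ω) [IsProbabilityMeasure P] (ℱ : Filtration ℕ m0)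
    (M : ℕ → Ω → Fin 2 → ℝ)
    (hmart : Martingale M ℱ P)
    (Q : ℕ → Ω → Fin 2 → Fin 2 → ℝ)
    (hQ : ∀ n ω i j, Q n ω i j = ∑ k ∈ Finset.Icc 1 n,
      ((P[fun ω' => M k ω' i * M k ω' j | ℱ (k - 1)]) ω
        - M (k - 1) ω i * M (k - 1) ω j))
    (γ : ℝ) (hγ0 : 0 < γ) (hγ1 : γ < 1)
    (ω₁ ω₂ : ℝ) (hω₁ : 0 < ω₁) (hω₂ : 0 < ω₂)
    (h11 : ∀ᵐ ω ∂P, Tendsto (fun n : ℕ => Q n ω 0 0 / ((n : ℝ) ^ (1 + γ) * ω₁))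
      atTop (nhds 1))
    (h22 : ∀ᵐ ω ∂P, Tendsto (fun n : ℕ => Q n ω 1 1 / ((n : ℝ) * ω₂))
      atTop (nhds 1)) :
    ∀ᵐ ω ∂P, Tendsto (fun n : ℕ =>
        Real.sqrt ((M n ω 0) ^ 2 + (M n ω 1) ^ 2) / (n : ℝ))
      atTop (nhds 0) := by
  have hcoord (i : Fin 2) : Martingale (fun n ω => M n ω i) ℱ P :=
    hmart.comp_continuousLinearMap (ContinuousLinearMap.proj i)
  have hQii (i : Fin 2) (n : ℕ) (ω : Ω) :
      Q n ω i i = predictableQuadVar P ℱ (fun n ω => M n ω i) n ω := hQ n ω i i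
  have h0 := (hcoord 0).ae_tendsto_div_of_tendsto_predictableQuadVar_div (c := 1 + γ)
    (w := fun n => (n : ℝ) ^ (1 + γ) * ω₁)
    (by linarith)
    (((tendsto_rpow_atTop (by linarith)).comp tendsto_natCast_atTop_atTop).atTop_mul_const hω₁)
    ((isBigO_const_mul_self ω₁ _ _).congr_left fun n => mul_comm _ _)
    (by simpa only [hQii] using h11)
  have h1 := (hcoord 1).ae_tendsto_div_of_tendsto_predictableQuadVar_div (c := 1)
    (w := fun n => (n : ℝ) * ω₂)
    (by norm_num) (tendsto_natCast_atTop_atTop.atTop_mul_const hω₂)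
    (by simpa only [Real.rpow_one] using
      (isBigO_const_mul_self ω₂ _ _).congr_left fun n => mul_comm _ _)
    (by simpa only [hQii] using h22)
  filter_upwards [h0, h1] with ω h0 h1
  have hsqrt := ((h0.pow 2).add (h1.pow 2)).sqrt
  rw [zero_pow two_ne_zero, add_zero, Real.sqrt_zero] at hsqrt
  refine hsqrt.congr fun n => ?_
  rw [div_pow, div_pow, ← add_div, Real.sqrt_div (by positivity), Real.sqrt_sq n.cast_nonneg]

/-- Strong law for an ℝ²-valued martingale whose predictable
square variation has diagonal entries growing like n^{1+γ}ω₁ and nω₂ (ω₁ > 0,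
ω₂ > 0) and off-diagonal entries O(n): then ‖M_n‖/n → 0 almost surely. -/
theorem vector_martingale_slln {Ω : Type*} {m0 : MeasurableSpace Ω}
    (P : Measure Ω) [IsProbabilityMeasure P] (ℱ : Filtration ℕ m0)
    (M : ℕ → Ω → Fin 2 → ℝ)
    (hmart : Martingale M ℱ P)
    (Q : ℕ → Ω → Fin 2 → Fin 2 → ℝ)
    (hQ : ∀ n ω i j, Q n ω i j = ∑ k ∈ Finset.Icc 1 n,
      ((P[fun ω' => M k ω' i * M k ω' j | ℱ (k - 1)]) ω
        - M (k - 1) ω i * M (k - 1) ω j))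
    (γ : ℝ) (hγ0 : 0 < γ) (hγ1 : γ < 1)
    (ω₁ ω₂ : ℝ) (hω₁ : 0 < ω₁) (hω₂ : 0 < ω₂)
    (h11 : ∀ᵐ ω ∂P, Tendsto (fun n : ℕ => Q n ω 0 0 / ((n : ℝ) ^ (1 + γ) * ω₁))
      atTop (nhds 1))
    (h22 : ∀ᵐ ω ∂P, Tendsto (fun n : ℕ => Q n ω 1 1 / ((n : ℝ) * ω₂))
      atTop (nhds 1))
    (hoff : ∃ C : ℝ, ∀ᵐ ω ∂P, ∀ n : ℕ, 1 ≤ n →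
      |Q n ω 0 1| ≤ C * n ∧ |Q n ω 1 0| ≤ C * n) :
    ∀ᵐ ω ∂P, Tendsto (fun n : ℕ =>
        Real.sqrt ((M n ω 0) ^ 2 + (M n ω 1) ^ 2) / (n : ℝ))
      atTop (nhds 0) :=
  vector_martingale_slln_general P ℱ M hmart Q hQ γ hγ0 hγ1 ω₁ ω₂ hω₁ hω₂ h11 h22
end
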